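/- For all nonnegative integers n, m, k with k ≤ n + m, the identity (q^{n+m-k+1};q)_k = ∑_{j=0}^k \binom{k}{j}_q q^{j(j-k+m)} (q^{n-j+1};q)_j (q^{m-k+j+1};q)_{k-j} holds. -/

import Mathlib

/-!
Reversing the product gives `(q^(N-j+1); q)_j = (-1)^j q^(N j - C(j,2)) (q^(-N); q)_j`, and with
`a = q^(-n)`, `b = q^(-m)` this turns the identity into the q-binomial expansion
`(a b; q)_k = ∑ [k, j]_q a^(k-j) (a; q)_j (b; q)_(k-j)`. That expansion follows by induction
on `k` from the q-Pascal rule `[k+1, j+1]_q = q^(j+1) [k, j+1]_q + [k, j]_q`, after splitting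
`1 - a b q^k = q^j a (1 - b q^(k-j)) + (1 - a q^j)`.
-/

open Finset

noncomputable def qPoch (q a : ℂ) (n : ℕ) : ℂ := ∏ j ∈ Finset.range n, (1 - a * q ^ j)

noncomputable def qPochInf (q a : ℂ) : ℂ := ∏' j : ℕ, (1 - a * q ^ j)

noncomputable def cauchyP (q x y : ℂ) (n : ℕ) : ℂ := ∏ j ∈ Finset.range n, (x - q ^ j * y)

noncomputable def qBinom (q : ℂ) (n k : ℕ) : ℂ := qPoch q q n / (qPoch q q k * qPoch q q (n - k))

noncomputable def qDeriv (q : ℂ) (f : ℂ → ℂ) : ℂ → ℂ := fun x => (f x - f (q * x)) / x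

noncomputable def qTheta (q : ℂ) (f : ℂ → ℂ → ℂ) : ℂ → ℂ → ℂ :=
  fun x y => (f (q⁻¹ * x) y - f x (q * y)) / (q⁻¹ * x - y)

/-- `₁Φ₁(a; 0; q, z)` -/
noncomputable def phi11 (q a z : ℂ) : ℂ :=
  ∑' m : ℕ, (-1) ^ m * q ^ m.choose 2 * qPoch q a m * z ^ m / qPoch q q m

/-- generalized Cauchy polynomials `p_n(x,y,a)` -/
noncomputable def genCauchy (q a x y : ℂ) (n : ℕ) : ℂ :=
  ∑ k ∈ Finset.range (n + 1),
    qBinom q n k * (-1) ^ k * q ^ k.choose 2 * qPoch q a k * x ^ (n - k) * y ^ k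

/-- generalized Hahn polynomials `h_n(x,y,a,b|q)` -/
noncomputable def hahn (q x y a b : ℂ) (n : ℕ) : ℂ :=
  ∑ k ∈ Finset.range (n + 1),
    qBinom q n k * (-1) ^ k * q ^ k.choose 2 * b ^ k * qPoch q a k * cauchyP q y x (n - k)

@[simp]
lemma qPoch_zero (q a : ℂ) : qPoch q a 0 = 1 := rfl

lemma qPoch_succ (q a : ℂ) (n : ℕ) : qPoch q a (n + 1) = qPoch q a n * (1 - a * q ^ n) :=
  prod_range_succ _ _

lemma qPoch_succ' (q a : ℂ) (n : ℕ) : qPoch q a (n + 1) = (1 - a) * qPoch q (q * a) n := by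
  rw [qPoch, qPoch, prod_range_succ', pow_zero, mul_one, mul_comm]
  exact congrArg _ (prod_congr rfl fun i _ => by ring)

lemma one_sub_mul_pow_ne_zero {q : ℂ} (hq : ∀ t : ℕ, q ^ (t + 1) ≠ 1) (t : ℕ) :
    1 - q * q ^ t ≠ 0 := by
  rw [← pow_succ']
  exact sub_ne_zero.2 (hq t).symm

lemma qPoch_self_ne_zero {q : ℂ} (hq : ∀ t : ℕ, q ^ (t + 1) ≠ 1) (n : ℕ) :
    qPoch q q n ≠ 0 :=
  prod_ne_zero_iff.2 fun t _ => one_sub_mul_pow_ne_zero hq t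

lemma qBinom_zero_right {q : ℂ} (hq : ∀ t : ℕ, q ^ (t + 1) ≠ 1) (n : ℕ) :
    qBinom q n 0 = 1 := by
  simp [qBinom, qPoch_self_ne_zero hq]

lemma qBinom_self {q : ℂ} (hq : ∀ t : ℕ, q ^ (t + 1) ≠ 1) (n : ℕ) :
    qBinom q n n = 1 := by
  simp [qBinom, qPoch_self_ne_zero hq]

lemma qBinom_succ_succ {q : ℂ} (hq : ∀ t : ℕ, q ^ (t + 1) ≠ 1) {j k : ℕ} (h : j < k) :
    qBinom q (k + 1) (j + 1) = q ^ (j + 1) * qBinom q k (j + 1) + qBinom q k j := by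
  obtain ⟨l, rfl⟩ := Nat.exists_eq_add_of_lt h
  rw [qBinom, qBinom, qBinom, show j + l + 1 + 1 - (j + 1) = l + 1 by omega,
    show j + l + 1 - (j + 1) = l by omega, show j + l + 1 - j = l + 1 by omega,
    qPoch_succ q q (j + l + 1), qPoch_succ q q l, qPoch_succ q q j]
  have hj := qPoch_self_ne_zero hq j
  have hl := qPoch_self_ne_zero hq l
  have hjl := qPoch_self_ne_zero hq (j + l + 1)
  have hj' := one_sub_mul_pow_ne_zero hq j
  have hl' := one_sub_mul_pow_ne_zero hq l
  field_simp
  ring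

noncomputable def qPochMulTerm (q a b : ℂ) (k j : ℕ) : ℂ :=
  qBinom q k j * a ^ (k - j) * qPoch q a j * qPoch q b (k - j)

theorem qPoch_mul_eq_sum {q : ℂ} (hq : ∀ t : ℕ, q ^ (t + 1) ≠ 1) (a b : ℂ) (k : ℕ) :
    qPoch q (a * b) k = ∑ j ∈ range (k + 1), qPochMulTerm q a b k j := by
  induction k with
  | zero => simp [qPochMulTerm, qBinom_self hq]
  | succ k ih =>
    let A j := q ^ j * qBinom q k j * a ^ (k - j + 1) * qPoch q a j * qPoch q b (k - j + 1)
    let B j := qBinom q k j * a ^ (k - j) * qPoch q a (j + 1) * qPoch q b (k - j)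
    have hsplit : ∀ j ∈ range (k + 1),
        qPochMulTerm q a b k j * (1 - a * b * q ^ k) = A j + B j := by
      intro j hj
      have hpow : q ^ j * q ^ (k - j) = q ^ k := by
        rw [← pow_add, Nat.add_sub_cancel' (Nat.lt_succ_iff.1 (mem_range.1 hj))]
      simp only [qPochMulTerm, A, B, qPoch_succ, pow_succ]
      linear_combination
        (qBinom q k j * a ^ (k - j) * qPoch q a j * qPoch q b (k - j) * a * b) * hpow
    have hfirst : qPochMulTerm q a b (k + 1) 0 = A 0 := by
      simp only [qPochMulTerm, A, qBinom_zero_right hq, Nat.sub_zero, pow_zero, pow_succ]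
      ring
    have hlast : qPochMulTerm q a b (k + 1) (k + 1) = B k := by
      simp only [qPochMulTerm, B, qBinom_self hq, Nat.sub_self]
    have hmid : ∀ j ∈ range k, qPochMulTerm q a b (k + 1) (j + 1) = A (j + 1) + B j := by
      intro j hj
      have hjk := mem_range.1 hj
      simp only [qPochMulTerm, A, B, qBinom_succ_succ hq hjk,
        show k + 1 - (j + 1) = k - j by omega, show k - (j + 1) + 1 = k - j by omega]
      ring
    calc qPoch q (a * b) (k + 1) = ∑ j ∈ range (k + 1), (A j + B j) := by
          rw [qPoch_succ, ih, sum_mul]; exact sum_congr rfl hsplit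
      _ = A 0 + ∑ j ∈ range k, (A (j + 1) + B j) + B k := by
          rw [sum_add_distrib, sum_range_succ' A, sum_range_succ B, sum_add_distrib]; ring
      _ = ∑ j ∈ range (k + 1 + 1), qPochMulTerm q a b (k + 1) j := by
          rw [sum_range_succ, sum_range_succ', hfirst, hlast, sum_congr rfl hmid]
          ring

lemma Nat.add_choose_two (j d : ℕ) : (j + d).choose 2 = j.choose 2 + d.choose 2 + j * d := by
  qify
  simp only [Nat.cast_choose_two, Nat.cast_add]
  ring

lemma qPoch_zpow_reflect {q : ℂ} (hq : q ≠ 0) (N : ℤ) (j : ℕ) :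
    qPoch q (q ^ (N - j + 1)) j = (-1) ^ j * q ^ (N * j - j.choose 2) * qPoch q (q ^ (-N)) j := by
  induction j with
  | zero => simp
  | succ j ih =>
    have hx : q ^ (N - j) ≠ 0 := zpow_ne_zero _ hq
    have hexp : q ^ (N * (j + 1 : ℕ) - (j + 1).choose 2) =
        q ^ (N * j - j.choose 2) * q ^ (N - j) := by
      rw [← zpow_add₀ hq, Nat.add_choose_two j 1]
      congr 1
      norm_num
      ring
    have hinv : q ^ (-N) * q ^ j = (q ^ (N - j))⁻¹ := by
      rw [← zpow_natCast, ← zpow_add₀ hq, ← zpow_neg]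
      ring_nf
    rw [qPoch_succ', show N - (j + 1 : ℕ) + 1 = N - j by push_cast; ring,
      ← zpow_one_add₀ hq, add_comm 1, ih, qPoch_succ, hexp, hinv, pow_succ]
    field_simp
    ring

theorem qPoch_zpow_vandermonde {q : ℂ} (hq0 : q ≠ 0) (hq : ∀ t : ℕ, q ^ (t + 1) ≠ 1)
    (n m : ℤ) (k : ℕ) :
    qPoch q (q ^ (n + m - k + 1)) k =
      ∑ j ∈ range (k + 1), qBinom q k j * q ^ ((j : ℤ) * (j - k + m)) *
        qPoch q (q ^ (n - j + 1)) j * qPoch q (q ^ (m - k + j + 1)) (k - j) := by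
  rw [qPoch_zpow_reflect hq0, neg_add, zpow_add₀ hq0, qPoch_mul_eq_sum hq, mul_sum]
  refine sum_congr rfl fun j hj => ?_
  obtain ⟨d, rfl⟩ := Nat.exists_eq_add_of_le (Nat.lt_succ_iff.1 (mem_range.1 hj))
  rw [show m - (j + d : ℕ) + j + 1 = m - d + 1 by push_cast; ring, qPochMulTerm,
    add_tsub_cancel_left, qPoch_zpow_reflect hq0, qPoch_zpow_reflect hq0,
    ← zpow_natCast (q ^ (-n)), ← zpow_mul]
  have hexp : q ^ ((n + m) * (j + d : ℕ) - (j + d).choose 2) * q ^ (-n * d) =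
      q ^ ((j : ℤ) * (j - (j + d : ℕ) + m)) * q ^ (n * j - j.choose 2) *
        q ^ (m * d - d.choose 2) := by
    simp only [← zpow_add₀ hq0, Nat.add_choose_two]
    push_cast
    ring_nf
  linear_combination (-1) ^ (j + d) * qBinom q (j + d) j * qPoch q (q ^ (-n)) j *
    qPoch q (q ^ (-m)) d * hexp

theorem stmt10_general (q : ℝ) (hq0 : 0 < q) (hq1 : q < 1) (n m k : ℕ) :
    qPoch (q : ℂ) ((q : ℂ) ^ ((n : ℤ) + (m : ℤ) - (k : ℤ) + 1)) k =
      ∑ j ∈ Finset.range (k + 1),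
        qBinom (q : ℂ) k j * (q : ℂ) ^ ((j : ℤ) * ((j : ℤ) - (k : ℤ) + (m : ℤ))) *
          qPoch (q : ℂ) ((q : ℂ) ^ ((n : ℤ) - (j : ℤ) + 1)) j *
          qPoch (q : ℂ) ((q : ℂ) ^ ((m : ℤ) - (k : ℤ) + (j : ℤ) + 1)) (k - j) := by
  have hroot (t : ℕ) : (q : ℂ) ^ (t + 1) ≠ 1 := by
    exact_mod_cast (pow_lt_one₀ hq0.le hq1 t.succ_ne_zero).ne
  exact qPoch_zpow_vandermonde (Complex.ofReal_ne_zero.2 hq0.ne') hroot n m k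

theorem stmt10 (q : ℝ) (hq0 : 0 < q) (hq1 : q < 1) (n m k : ℕ) (hk : k ≤ n + m) :
    qPoch (q : ℂ) ((q : ℂ) ^ ((n : ℤ) + (m : ℤ) - (k : ℤ) + 1)) k =
      ∑ j ∈ Finset.range (k + 1),
        qBinom (q : ℂ) k j * (q : ℂ) ^ ((j : ℤ) * ((j : ℤ) - (k : ℤ) + (m : ℤ))) *
          qPoch (q : ℂ) ((q : ℂ) ^ ((n : ℤ) - (j : ℤ) + 1)) j *
          qPoch (q : ℂ) ((q : ℂ) ^ ((m : ℤ) - (k : ℤ) + (j : ℤ) + 1)) (k - j) :=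
  stmt10_general q hq0 hq1 n m k
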